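/- arXiv:0805.2064 — 5 statements merged into one kernel-verified Lean document; each statement's English description precedes it below -/
import Mathlib

section
/- Let F be a field and m a positive integer that is invertible in F (i.e. (m : F) ≠ 0). Let V be an F-vector space and θ : V → V an F-linear endomorphism with θ^m = id. Then V is the internal direct sum, over the positive divisors d of m, of the subspaces ker(Φ_d(θ)), where Φ_d denotes the d-th cyclotomic polynomial with coefficients in F evaluated at θ. In particular, for distinct divisors d₁ ≠ d₂ of m the subspaces ker(Φ_{d₁}(θ)) and ker(Φ_{d₂}(θ)) intersect trivially, and together they span V. -/
open Polynomial

/-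
The polynomial `X ^ m - 1` kills `θ` and factors as `∏_{d ∣ m} Φ_d`. Since `m` is invertible in `F`,
`X ^ m - 1` is separable, so its factors `Φ_d` are pairwise coprime. For pairwise coprime factors
the kernel of `∏ qᵢ(θ)` is the sum of the kernels of the `qᵢ(θ)`, and each kernel meets the sum of
the others trivially (Bézout).
-/

open scoped Function

section CoprimeKernels

variable {R M ι : Type*} [CommRing R] [AddCommGroup M] [Module R M]
  (f : Module.End R M) {q : ι → R[X]} {S : Finset ι}

theorem ker_aeval_prod_eq_iSup_ker_aeval (hq : (S : Set ι).Pairwise (IsCoprime on q)) :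
    LinearMap.ker (aeval f (∏ i ∈ S, q i)) = ⨆ i ∈ S, LinearMap.ker (aeval f (q i)) := by
  classical
  induction S using Finset.induction_on with
  | empty => simp [Module.End.one_eq_id]
  | @insert a S ha ih =>
    have hqS : (S : Set ι).Pairwise (IsCoprime on q) := hq.mono (by simp)
    have hqa : IsCoprime (q a) (∏ i ∈ S, q i) :=
      IsCoprime.prod_right fun i hi => hq (by simp) (by simp [hi]) (ne_of_mem_of_not_mem hi ha).symm
    rw [Finset.prod_insert ha, ← sup_ker_aeval_eq_ker_aeval_mul_of_coprime f hqa, ih hqS,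
      Finset.iSup_insert]

theorem supIndep_ker_aeval (hq : (S : Set ι).Pairwise (IsCoprime on q)) :
    S.SupIndep fun i => LinearMap.ker (aeval f (q i)) := by
  intro T hT i hi hiT
  rw [Finset.sup_eq_iSup, ← ker_aeval_prod_eq_iSup_ker_aeval f (hq.mono hT)]
  exact disjoint_ker_aeval_of_isCoprime f <|
    IsCoprime.prod_right fun j hj => hq hi (hT hj) (ne_of_mem_of_not_mem hj hiT).symm

theorem isInternal_ker_aeval [DecidableEq ι] (hq : (S : Set ι).Pairwise (IsCoprime on q))
    (hf : aeval f (∏ i ∈ S, q i) = 0) :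
    DirectSum.IsInternal fun i : S => LinearMap.ker (aeval f (q i)) := by
  refine DirectSum.isInternal_submodule_of_iSupIndep_of_iSup_eq_top
    ((supIndep_ker_aeval f hq).independent) ?_
  rw [iSup_subtype, ← ker_aeval_prod_eq_iSup_ker_aeval f hq, hf, LinearMap.ker_zero]

end CoprimeKernels

theorem pairwise_isCoprime_cyclotomic_divisors {F : Type*} [Field F] {m : ℕ} (hm : (m : F) ≠ 0) :
    (m.divisors : Set ℕ).Pairwise (IsCoprime on fun d => cyclotomic d F) := by
  intro d₁ h₁ d₂ h₂ hne
  have hdvd : cyclotomic d₁ F * cyclotomic d₂ F ∣ X ^ m - 1 := by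
    rw [← prod_cyclotomic_eq_X_pow_sub_one (Nat.pos_of_ne_zero (by rintro rfl; simp at hm)),
      ← Finset.prod_pair (f := fun d => cyclotomic d F) hne]
    exact Finset.prod_dvd_prod_of_subset _ _ _ (Finset.insert_subset h₁ (by simpa using h₂))
  exact ((X_pow_sub_one_separable_iff.mpr hm).of_dvd hdvd).isCoprime

theorem directSum_ker_cyclotomic_of_pow_eq_one_general
    (F : Type*) [Field F] (V : Type*) [AddCommGroup V] [Module F V]
    (m : ℕ) (hminv : (m : F) ≠ 0)
    (θ : Module.End F V) (hθ : θ ^ m = 1) :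
    DirectSum.IsInternal
        (fun d : {d : ℕ // d ∈ m.divisors} =>
          LinearMap.ker (aeval θ (cyclotomic (d : ℕ) F))) ∧
      (∀ d₁ ∈ m.divisors, ∀ d₂ ∈ m.divisors, d₁ ≠ d₂ →
        LinearMap.ker (aeval θ (cyclotomic d₁ F)) ⊓
          LinearMap.ker (aeval θ (cyclotomic d₂ F)) = ⊥) ∧
      (⨆ d ∈ m.divisors, LinearMap.ker (aeval θ (cyclotomic d F))) = ⊤ := by
  have hm : 0 < m := Nat.pos_of_ne_zero (by rintro rfl; simp at hminv)
  have hcop := pairwise_isCoprime_cyclotomic_divisors hminv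
  have hθ_root : aeval θ (∏ d ∈ m.divisors, cyclotomic d F) = 0 := by
    rw [prod_cyclotomic_eq_X_pow_sub_one hm, map_sub, map_pow, aeval_X, map_one, hθ, sub_self]
  refine ⟨isInternal_ker_aeval θ (q := fun d ↦ cyclotomic d F) hcop hθ_root, ?_, ?_⟩
  · intro d₁ h₁ d₂ h₂ hne
    exact disjoint_iff.mp (disjoint_ker_aeval_of_isCoprime θ (hcop h₁ h₂ hne))
  · rw [← ker_aeval_prod_eq_iSup_ker_aeval θ hcop, hθ_root, LinearMap.ker_zero]

/-- If `θ` is a linear endomorphism of an `F`-vector space with `θ^m = id`, where `m` is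
invertible in the field `F`, then `V` is the internal direct sum of the kernels of the
cyclotomic polynomials `Φ_d(θ)` over the positive divisors `d` of `m`.  In particular,
the kernels for distinct divisors intersect trivially and together they span `V`. -/
theorem directSum_ker_cyclotomic_of_pow_eq_one
    (F : Type*) [Field F] (V : Type*) [AddCommGroup V] [Module F V]
    (m : ℕ) (hm : 0 < m) (hminv : (m : F) ≠ 0)
    (θ : Module.End F V) (hθ : θ ^ m = 1) :
    DirectSum.IsInternal
        (fun d : {d : ℕ // d ∈ m.divisors} =>
          LinearMap.ker (aeval θ (cyclotomic (d : ℕ) F))) ∧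
      (∀ d₁ ∈ m.divisors, ∀ d₂ ∈ m.divisors, d₁ ≠ d₂ →
        LinearMap.ker (aeval θ (cyclotomic d₁ F)) ⊓
          LinearMap.ker (aeval θ (cyclotomic d₂ F)) = ⊥) ∧
      (⨆ d ∈ m.divisors, LinearMap.ker (aeval θ (cyclotomic d F))) = ⊤ :=
  directSum_ker_cyclotomic_of_pow_eq_one_general F V m hminv θ hθ
end

section
/- Let k be an algebraically closed field, let m, n be positive integers, and let A be an n×n integer matrix with A^m = 1 and det(A − 1) ≠ 0 (as an integer). Then: (i) the integer matrix 1 + A + A² + ⋯ + A^{m−1} is zero; and (ii) the group homomorphism (kˣ)^n → (kˣ)^n sending t to t · φ_A(t)⁻¹ is surjective, i.e. every element of (kˣ)^n has the form t · φ_A(t)⁻¹ for some t. -/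
/-!
The map `t ↦ t * (φ_A t)⁻¹` is `φ_(1 - A)`, and `A ↦ φ_A` turns matrix products into
composition. So `φ_B ∘ φ_(adj B) = φ_(det B • 1)` is `t ↦ t ^ det B`, which is surjective over an
algebraically closed field when `det B ≠ 0`. Part (i) is the geometric sum identity
`(∑ Aⁱ)(A - 1) = Aᵐ - 1 = 0`, cancelled using the adjugate of `A - 1`.
-/

/-- The group endomorphism of the torus `(kˣ)^n` induced by an integer matrix `A` acting
on the cocharacter lattice: `(φ_A t) i = ∏ j, (t j)^(A i j)`. -/
def torusEndo {k : Type*} [Field k] {n : ℕ} (A : Matrix (Fin n) (Fin n) ℤ)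
    (t : Fin n → kˣ) : Fin n → kˣ :=
  fun i => ∏ j, (t j) ^ (A i j)

theorem zpow_finset_sum {G ι : Type*} [CommGroup G] (x : G) (s : Finset ι) (f : ι → ℤ) :
    x ^ (∑ a ∈ s, f a) = ∏ a ∈ s, x ^ f a := by
  induction s using Finset.cons_induction with
  | empty => simp
  | cons a s ha ih => rw [Finset.sum_cons, Finset.prod_cons, zpow_add, ih]

theorem Matrix.geom_sum_eq_zero_of_pow_eq_one_of_det_sub_one_ne_zero {R ι : Type*} [CommRing R]
    [IsDomain R] [Fintype ι] [DecidableEq ι] {A : Matrix ι ι R} {m : ℕ} (hA : A ^ m = 1)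
    (hdet : (A - 1).det ≠ 0) : ∑ i ∈ Finset.range m, A ^ i = 0 := by
  have hmul : (∑ i ∈ Finset.range m, A ^ i) * (A - 1) = 0 := by
    rw [geom_sum_mul, hA, sub_self]
  have hsmul : (A - 1).det • ∑ i ∈ Finset.range m, A ^ i = 0 := by
    rw [← mul_one (∑ i ∈ _, _), ← Matrix.mul_smul, ← Matrix.mul_adjugate, ← mul_assoc, hmul,
      zero_mul]
  exact (smul_eq_zero.mp hsmul).resolve_left hdet

theorem IsAlgClosed.exists_units_zpow_eq {k : Type*} [Field k] [IsAlgClosed k] {d : ℤ}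
    (hd : d ≠ 0) (u : kˣ) : ∃ v : kˣ, v ^ d = u := by
  obtain ⟨z, hz⟩ := IsAlgClosed.exists_pow_nat_eq (u : k) (Int.natAbs_pos.mpr hd)
  have hz0 : z ≠ 0 := by
    rintro rfl
    exact u.ne_zero (hz ▸ zero_pow (Int.natAbs_ne_zero.mpr hd))
  have hv : Units.mk0 z hz0 ^ d.natAbs = u := Units.ext (by simpa using hz)
  rcases d.natAbs_eq with h | h
  · exact ⟨Units.mk0 z hz0, by rw [h, zpow_natCast, hv]⟩
  · exact ⟨(Units.mk0 z hz0)⁻¹, by rw [h, zpow_neg, zpow_natCast, inv_pow, inv_inv, hv]⟩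

section torusEndo

variable {k : Type*} [Field k] {n : ℕ}

theorem torusEndo_one (t : Fin n → kˣ) : torusEndo 1 t = t := by
  funext i
  simp [torusEndo, Matrix.one_apply]

theorem torusEndo_sub (B C : Matrix (Fin n) (Fin n) ℤ) (t : Fin n → kˣ) :
    torusEndo (B - C) t = torusEndo B t * (torusEndo C t)⁻¹ := by
  funext i
  simp only [torusEndo, Matrix.sub_apply, zpow_sub, Finset.prod_mul_distrib,
    Finset.prod_inv_distrib, Pi.mul_apply, Pi.inv_apply]

theorem torusEndo_smul (d : ℤ) (B : Matrix (Fin n) (Fin n) ℤ) (t : Fin n → kˣ) :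
    torusEndo (d • B) t = torusEndo B t ^ d := by
  funext i
  simp only [torusEndo, Matrix.smul_apply, smul_eq_mul, mul_comm d, zpow_mul, Finset.prod_zpow,
    Pi.pow_apply]

theorem torusEndo_mul (B C : Matrix (Fin n) (Fin n) ℤ) (t : Fin n → kˣ) :
    torusEndo (B * C) t = torusEndo B (torusEndo C t) := by
  funext i
  simp only [torusEndo, Matrix.mul_apply, zpow_finset_sum, ← Finset.prod_zpow, ← zpow_mul]
  rw [Finset.prod_comm]
  simp only [mul_comm]

theorem torusEndo_surjective [IsAlgClosed k] {B : Matrix (Fin n) (Fin n) ℤ} (hB : B.det ≠ 0) :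
    Function.Surjective (torusEndo (k := k) B) := by
  intro s
  choose r hr using fun i => IsAlgClosed.exists_units_zpow_eq hB (s i)
  refine ⟨torusEndo B.adjugate r, ?_⟩
  rw [← torusEndo_mul, Matrix.mul_adjugate, torusEndo_smul, torusEndo_one]
  exact funext hr

end torusEndo

theorem torus_sub_surjective_of_finite_fixed_points_general
    (k : Type*) [Field k] [IsAlgClosed k] (m n : ℕ)
    (A : Matrix (Fin n) (Fin n) ℤ) (hA : A ^ m = 1) (hdet : (A - 1).det ≠ 0) :
    (∑ i ∈ Finset.range m, A ^ i = 0) ∧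
      Function.Surjective (fun t : Fin n → kˣ => t * (torusEndo A t)⁻¹) := by
  refine ⟨Matrix.geom_sum_eq_zero_of_pow_eq_one_of_det_sub_one_ne_zero hA hdet, ?_⟩
  have hdet' : (1 - A).det ≠ 0 := by
    rwa [← neg_sub, Matrix.det_neg, mul_ne_zero_iff, and_iff_right (by simp)]
  convert torusEndo_surjective (k := k) hdet' using 1
  funext t
  rw [torusEndo_sub, torusEndo_one]

/-- Let `A` be an `n×n` integer matrix with `A^m = 1` and `det (A - 1) ≠ 0` (finitely many
fixed points on the torus).  Then `1 + A + ⋯ + A^(m-1) = 0`, and the map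
`t ↦ t * (φ_A t)⁻¹` on the torus `(kˣ)^n` over an algebraically closed field `k` is
surjective. -/
theorem torus_sub_surjective_of_finite_fixed_points
    (k : Type*) [Field k] [IsAlgClosed k] (m n : ℕ) (hm : 0 < m) (hn : 0 < n)
    (A : Matrix (Fin n) (Fin n) ℤ) (hA : A ^ m = 1) (hdet : (A - 1).det ≠ 0) :
    (∑ i ∈ Finset.range m, A ^ i = 0) ∧
      Function.Surjective (fun t : Fin n → kˣ => t * (torusEndo A t)⁻¹) :=
  torus_sub_surjective_of_finite_fixed_points_general k m n A hA hdet
end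

section
/- Let P be a root pairing over a field k with index set ι, root space M and coroot space N. Let S ⊆ ι, let w be an element of the subgroup of linear automorphisms of N generated by the coreflections s_i for i ∈ S, let ζ ∈ k with ζ ≠ 1, and let v ∈ N satisfy w v = ζ • v. Then for every j ∈ ι such that P.pairing j i = 0 for all i ∈ S (i.e. the root of j pairs to zero with every coroot indexed by S), the coreflection s_j fixes v; consequently every element of the subgroup generated by such coreflections s_j fixes v. -/
/-- Let `P` be a root pairing, `S ⊆ ι`, and `w` an element of the subgroup of linear
automorphisms of `N` generated by the coreflections `s_i` for `i ∈ S`.  If `w v = ζ • v`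
with `ζ ≠ 1`, then every coreflection `s_j` with `P.pairing j i = 0` for all `i ∈ S`
fixes `v`; consequently every element of the subgroup generated by such coreflections
fixes `v`. -/
theorem coreflection_fixes_eigenvector_of_orthogonal
    {ι k M N : Type*} [Field k] [AddCommGroup M] [Module k M]
    [AddCommGroup N] [Module k N]
    (P : RootPairing ι k M N) (S : Set ι) (w : N ≃ₗ[k] N)
    (hw : w ∈ Subgroup.closure {g : N ≃ₗ[k] N | ∃ i ∈ S, g = P.coreflection i})
    (ζ : k) (hζ : ζ ≠ 1) (v : N) (hv : w v = ζ • v) :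
    (∀ j : ι, (∀ i ∈ S, P.pairing j i = 0) → P.coreflection j v = v) ∧
      ∀ u ∈ Subgroup.closure
          {g : N ≃ₗ[k] N | ∃ j : ι, (∀ i ∈ S, P.pairing j i = 0) ∧ g = P.coreflection j},
        u v = v := by
  have key : ∀ j : ι, (∀ i ∈ S, P.pairing j i = 0) → P.coreflection j v = v := by
    intro j hj
    -- root' j is invariant under the subgroup generated by coreflections in S
    have inv : ∀ g ∈ Subgroup.closure {g : N ≃ₗ[k] N | ∃ i ∈ S, g = P.coreflection i},
        ∀ u : N, P.root' j (g u) = P.root' j u := by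
      intro g hg
      refine Subgroup.closure_induction ?_ ?_ ?_ ?_ hg
      · rintro g ⟨i, hi, rfl⟩ u
        rw [P.coreflection_apply]
        simp [hj i hi]
      · intro u; simp
      · intro a b _ _ ha hb u
        have : (a * b) u = a (b u) := rfl
        rw [this, ha, hb]
      · intro a _ ha u
        have h := (ha (a⁻¹ u)).symm
        rwa [show a (a⁻¹ u) = u from a.apply_symm_apply u] at h
    have h1 : P.root' j v = ζ * P.root' j v := by
      have := inv w hw v
      rw [hv] at this
      simpa [mul_comm] using this.symm
    have h3 : (ζ - 1) * P.root' j v = 0 := by linear_combination -h1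
    have h2 : P.root' j v = 0 := by
      rcases mul_eq_zero.mp h3 with h | h
      · exact absurd (sub_eq_zero.mp h) hζ
      · exact h
    rw [P.coreflection_apply, h2, zero_smul, sub_zero]
  refine ⟨key, ?_⟩
  intro u hu
  refine Subgroup.closure_induction ?_ ?_ ?_ ?_ hu
  · rintro g ⟨j, hj, rfl⟩; exact key j hj
  · rfl
  · intro a b _ _ ha hb
    show a (b v) = v
    rw [hb, ha]
  · intro a _ ha
    calc a⁻¹ v = a⁻¹ (a v) := by rw [ha]
    _ = v := a.symm_apply_apply v
end

section
/- Let P be a root pairing over a field k with index set ι, and let i₁, …, i_r ∈ ι be indices whose coroots P.coroot i₁, …, P.coroot i_r are linearly independent in N. Let w = s_{i_r} ∘ ⋯ ∘ s_{i_1} be the composite of the corresponding coreflections acting on N. If v ∈ N satisfies w v = v, then ⟨P.root i_j, v⟩ = 0 for every j = 1, …, r; in particular v is fixed by each individual coreflection s_{i_j}. -/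
/-!
Write `w = s_last ∘ w'`. Every coreflection moves a vector by a multiple of its coroot, so
`w' v - v` lies in the span of the earlier coroots, while `w v = v` says that `w' v - v` is a
multiple of the last coroot. Linear independence forces that multiple to vanish, so
`w' v = v` and `⟨α_last, v⟩ = 0`, and induction on the number of factors finishes.
-/

namespace RootPairing

section CommRing

variable {ι R M N : Type*} [CommRing R] [AddCommGroup M] [Module R M] [AddCommGroup N]
  [Module R N] (P : RootPairing ι R M N)

/-- `s_{c (r-1)} ∘ ⋯ ∘ s_{c 0}`, so that `s_{c 0}` acts first. -/
def coreflectionProd {r : ℕ} (c : Fin r → ι) : N ≃ₗ[R] N :=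
  (List.ofFn fun j => P.coreflection (c j)).reverse.prod

lemma coreflection_apply_of_root'_eq_zero {i : ι} {v : N} (h : P.root' i v = 0) :
    P.coreflection i v = v := by
  rw [coreflection_apply, h, zero_smul, sub_zero]

@[simp]
lemma coreflectionProd_zero (c : Fin 0 → ι) : P.coreflectionProd c = 1 := rfl

lemma coreflectionProd_succ {r : ℕ} (c : Fin (r + 1) → ι) :
    P.coreflectionProd c = P.coreflection (c (Fin.last r)) * P.coreflectionProd (Fin.init c) := by
  simp only [coreflectionProd, List.ofFn_succ', List.concat_eq_append, List.reverse_append,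
    List.reverse_singleton, List.singleton_append, List.prod_cons]
  rfl

lemma coreflectionProd_apply_sub_mem_span {r : ℕ} (c : Fin r → ι) (v : N) :
    P.coreflectionProd c v - v ∈ Submodule.span R (Set.range fun j => P.coroot (c j)) := by
  induction r with
  | zero => simp
  | succ r ih =>
    set u := P.coreflectionProd (Fin.init c) v
    have hu : u - v ∈ Submodule.span R (Set.range fun j => P.coroot (c j)) :=
      Submodule.span_mono (Set.range_comp_subset_range Fin.castSucc _) (ih (Fin.init c))
    have hlast :
        P.coroot (c (Fin.last r)) ∈ Submodule.span R (Set.range fun j => P.coroot (c j)) :=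
      Submodule.subset_span ⟨_, rfl⟩
    rw [coreflectionProd_succ, LinearEquiv.mul_apply, coreflection_apply, sub_right_comm]
    exact sub_mem hu (Submodule.smul_mem _ _ hlast)

end CommRing

variable {ι k M N : Type*} [Field k] [AddCommGroup M] [Module k M] [AddCommGroup N]
  [Module k N] (P : RootPairing ι k M N)

lemma root'_eq_zero_of_coreflection_apply_eq {i : ι} {u v : N} {p : Submodule k N}
    (huv : P.coreflection i u = v) (hmem : u - v ∈ p) (hi : P.coroot i ∉ p) :
    P.root' i u = 0 := by
  by_contra ha
  rw [← huv, coreflection_apply, sub_sub_cancel, Submodule.smul_mem_iff _ ha] at hmem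
  exact hi hmem

lemma root'_eq_zero_of_coreflectionProd_apply_eq {r : ℕ} {c : Fin r → ι}
    (hli : LinearIndependent k fun j => P.coroot (c j)) {v : N}
    (hv : P.coreflectionProd c v = v) (j : Fin r) : P.root' (c j) v = 0 := by
  induction r with
  | zero => exact j.elim0
  | succ r ih =>
    set u := P.coreflectionProd (Fin.init c) v
    have hu : P.coreflection (c (Fin.last r)) u = v := by
      rwa [coreflectionProd_succ] at hv
    have hlast : P.coroot (c (Fin.last r)) ∉
        Submodule.span k (Set.range fun j => P.coroot (Fin.init c j)) := by
      have := hli.notMem_span_image (s := Set.range Fin.castSucc) (x := Fin.last r) (by simp)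
      rwa [← Set.range_comp] at this
    have ha : P.root' (c (Fin.last r)) u = 0 :=
      P.root'_eq_zero_of_coreflection_apply_eq hu
        (P.coreflectionProd_apply_sub_mem_span _ v) hlast
    have huv : u = v := (P.coreflection_apply_of_root'_eq_zero ha).symm.trans hu
    induction j using Fin.lastCases with
    | last => rwa [← huv]
    | cast j => exact ih (hli.comp _ (Fin.castSucc_injective r)) huv j

end RootPairing

/-- Let `P` be a root pairing and `c : Fin r → ι` a family of indices whose coroots are
linearly independent.  If `v` is fixed by the composite `s_{c(r-1)} ∘ ⋯ ∘ s_{c 0}` of the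
corresponding coreflections, then `⟨P.root (c j), v⟩ = 0` for every `j`; in particular `v`
is fixed by each individual coreflection `s_{c j}`. -/
theorem fixed_by_coreflection_product_iff_orthogonal
    {ι k M N : Type*} [Field k] [AddCommGroup M] [Module k M]
    [AddCommGroup N] [Module k N]
    (P : RootPairing ι k M N) (r : ℕ) (c : Fin r → ι)
    (hli : LinearIndependent k fun j => P.coroot (c j))
    (v : N)
    (hv : ((List.ofFn fun j => P.coreflection (c j)).reverse.prod : N ≃ₗ[k] N) v = v) :
    (∀ j : Fin r, P.toLinearMap (P.root (c j)) v = 0) ∧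
      ∀ j : Fin r, P.coreflection (c j) v = v := by
  have horth := P.root'_eq_zero_of_coreflectionProd_apply_eq hli hv
  exact ⟨horth, fun j => P.coreflection_apply_of_root'_eq_zero (horth j)⟩
end

section
/- Let k be a field, n a positive integer, and σ ∈ Equiv.Perm (Fin n) an n-cycle (i.e. σ is a cycle whose support is all of Fin n). Let g be an n×n matrix over k that is monomial with permutation σ (that is, g i j ≠ 0 if and only if i = σ j) and suppose det g = 1. Then g^n = (−1)^{n−1} • 1, i.e. g^n is the identity matrix if n is odd and minus the identity matrix if n is even. -/
/-! The entry `(g ^ m) i j` vanishes unless `i = (σ ^ m) j`, in which case it is the product of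
the entries `g (σ y) y` along the first `m` points `y` of the `σ`-orbit of `j`. For an `n`-cycle,
`σ ^ n = 1` and each orbit of length `n` passes through every point once, so `g ^ n` is the scalar
`∏ j, g (σ j) j`; expanding the determinant shows this scalar is `sign σ = (-1) ^ (n - 1)`. -/

/-- A square matrix `g` is monomial with permutation `σ` if `g i j ≠ 0` exactly when
`i = σ j`. -/
def Matrix.IsMonomialWith {k : Type*} [Field k] {ι : Type*}
    (g : Matrix ι ι k) (σ : Equiv.Perm ι) : Prop :=
  ∀ i j, g i j ≠ 0 ↔ i = σ j

open Finset Equiv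

theorem Equiv.Perm.IsCycle.prod_range_orderOf_pow_apply {α M : Type*} [Fintype α]
    [DecidableEq α] [CommMonoid M] {σ : Perm α} (hσ : σ.IsCycle) {x : α} (hx : σ x ≠ x)
    (f : α → M) : ∏ t ∈ range (orderOf σ), f ((σ ^ t) x) = ∏ y ∈ σ.support, f y := by
  refine prod_nbij (fun t => (σ ^ t) x) (fun t _ => Perm.pow_apply_mem_support.2
    (Perm.mem_support.2 hx)) ?_ ?_ fun _ _ => rfl
  · intro a ha b hb hab
    have hpow : σ ^ a = σ ^ b := hσ.pow_eq_pow_iff.2 ⟨x, hx, hab⟩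
    exact (pow_eq_pow_iff_modEq.1 hpow).eq_of_lt_of_lt (by simpa using ha) (by simpa using hb)
  · intro y hy
    obtain ⟨t, ht, rfl⟩ := (hσ.sameCycle hx (Perm.mem_support.1 hy)).exists_pow_eq'
    exact ⟨t, by simpa using ht, rfl⟩

namespace Matrix.IsMonomialWith

variable {k ι : Type*} [Field k] {σ : Perm ι} {g : Matrix ι ι k}

theorem apply_eq_zero (hg : g.IsMonomialWith σ) {i j : ι} (h : i ≠ σ j) : g i j = 0 :=
  not_not.1 fun hne => h ((hg i j).1 hne)

variable [Fintype ι]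

theorem mul_apply (hg : g.IsMonomialWith σ) (A : Matrix ι ι k) (i j : ι) :
    (A * g) i j = A i (σ j) * g (σ j) j := by
  rw [Matrix.mul_apply, sum_eq_single (σ j)]
  · intro l _ hl
    rw [hg.apply_eq_zero hl, mul_zero]
  · simp

variable [DecidableEq ι]

theorem pow_apply (hg : g.IsMonomialWith σ) (m : ℕ) (i j : ι) :
    (g ^ m) i j =
      if i = (σ ^ m) j then ∏ t ∈ range m, g (σ ((σ ^ t) j)) ((σ ^ t) j) else 0 := by
  induction m generalizing j with
  | zero => simp [one_apply]
  | succ m ih =>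
    have hshift : ∀ t, (σ ^ t) (σ j) = (σ ^ (t + 1)) j := fun t => by
      rw [pow_succ, Perm.mul_apply]
    rw [pow_succ, hg.mul_apply, ih, hshift, prod_range_succ']
    split_ifs <;> simp [hshift]

theorem det_eq (hg : g.IsMonomialWith σ) :
    g.det = Perm.sign σ * ∏ j, g (σ j) j := by
  rw [det_apply, sum_eq_single σ]
  · simp [Units.smul_def]
  · intro τ _ hτ
    obtain ⟨j, hj⟩ : ∃ j, τ j ≠ σ j := by
      by_contra! h
      exact hτ (Perm.ext h)
    rw [prod_eq_zero (f := fun i => g (τ i) i) (mem_univ j) (hg.apply_eq_zero hj), smul_zero]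
  · simp

theorem pow_orderOf_of_isCycle (hg : g.IsMonomialWith σ) (hσ : σ.IsCycle)
    (hσs : σ.support = univ) : g ^ orderOf σ = (∏ j, g (σ j) j) • (1 : Matrix ι ι k) := by
  ext i j
  have hj : σ j ≠ j := Perm.mem_support.1 (hσs ▸ mem_univ j)
  rw [hg.pow_apply, pow_orderOf_eq_one, Perm.one_apply,
    hσ.prod_range_orderOf_pow_apply hj (fun y => g (σ y) y), hσs]
  simp [one_apply]

end Matrix.IsMonomialWith

/-- If `g ∈ SL(n,k)` is a monomial matrix whose underlying permutation `σ` is an `n`-cycle,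
then `g^n = (-1)^(n-1) • 1`: the identity matrix when `n` is odd and minus the identity
matrix when `n` is even. -/
theorem monomial_coxeter_pow_eq
    (k : Type*) [Field k] (n : ℕ) (hn : 0 < n) (σ : Equiv.Perm (Fin n))
    (hσc : σ.IsCycle) (hσs : σ.support = Finset.univ)
    (g : Matrix (Fin n) (Fin n) k) (hg : g.IsMonomialWith σ) (hdet : g.det = 1) :
    g ^ n = ((-1 : k) ^ (n - 1)) • (1 : Matrix (Fin n) (Fin n) k) := by
  have hord : orderOf σ = n := by rw [hσc.orderOf, hσs, card_univ, Fintype.card_fin]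
  have hsign : ((Perm.sign σ : ℤ) : k) = (-1) ^ (n - 1) := by
    obtain ⟨m, rfl⟩ := Nat.exists_eq_add_one_of_ne_zero hn.ne'
    rw [hσc.sign, hσs, card_univ, Fintype.card_fin]
    push_cast
    ring
  have hprod : ∏ j, g (σ j) j = (Perm.sign σ : ℤ) := by
    have hsq : ((Perm.sign σ : ℤ) : k) * (Perm.sign σ : ℤ) = 1 := by
      rw [← Int.cast_mul, ← Units.val_mul, Int.units_mul_self, Units.val_one, Int.cast_one]
    rw [hg.det_eq] at hdet
    linear_combination (Perm.sign σ : ℤ) * hdet - (∏ j, g (σ j) j) * hsq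
  rw [← hsign, ← hprod, ← hg.pow_orderOf_of_isCycle hσc hσs, hord]
end
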